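/- arXiv:1801.04067 — 6 statements merged into one kernel-verified Lean document; each statement's English description precedes it below -/
import Mathlib

section
/- Let λ1, λ2, μ1, μ2 > 0 and define a1 = 1 + (λ1+λ2)/μ1 − μ2λ2/(μ1(μ2+λ1)), a3 = λ1/μ1, a5 = λ1/(μ2+λ1). Then the quadratic p(l) = l² − l(a1 + a5 − 1) + a3·a5 has two distinct real roots, i.e., its discriminant (a1+a5−1)² − 4·a3·a5 is strictly positive. -/
/-! With `x = λ₁ / (μ₁ (μ₂ + λ₁))` one finds `a₁ + a₅ - 1 = x (μ₁ + μ₂ + λ₁ + λ₂)` and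
`a₃ a₅ = x² μ₁ (μ₂ + λ₁)`, so the discriminant is `x² ((a + b + λ₂)² - 4ab)` with `a = μ₁`,
`b = μ₂ + λ₁`, and `(a + b + c)² - 4ab = (a - b)² + c (2a + 2b + c) > 0` for `c > 0`. -/

lemma four_mul_lt_add_add_sq {a b c : ℝ} (ha : 0 ≤ a) (hb : 0 ≤ b) (hc : 0 < c) :
    4 * a * b < (a + b + c) ^ 2 := by
  nlinarith [sq_nonneg (a - b)]

theorem stmt_1 (l1 l2 m1 m2 : ℝ) (hl1 : 0 < l1) (hl2 : 0 < l2)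
    (hm1 : 0 < m1) (hm2 : 0 < m2)
    (a1 : ℝ) (ha1 : a1 = 1 + (l1 + l2) / m1 - m2 * l2 / (m1 * (m2 + l1)))
    (a3 : ℝ) (ha3 : a3 = l1 / m1)
    (a5 : ℝ) (ha5 : a5 = l1 / (m2 + l1)) :
    0 < (a1 + a5 - 1) ^ 2 - 4 * (a3 * a5) := by
  have hb : 0 < m2 + l1 := by positivity
  have hdisc : (a1 + a5 - 1) ^ 2 - 4 * (a3 * a5) =
      (l1 / (m1 * (m2 + l1))) ^ 2 * ((m1 + (m2 + l1) + l2) ^ 2 - 4 * m1 * (m2 + l1)) := by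
    subst ha1 ha3 ha5
    field_simp
    ring
  rw [hdisc]
  exact mul_pos (by positivity) (sub_pos.2 (four_mul_lt_add_add_sq hm1.le hb.le hl2))
end

section
/- Let λ1, λ2, μ1, μ2 > 0 with μ1 > λ1(1 + λ2/μ2). Define a1 = 1 + (λ1+λ2)/μ1 − μ2λ2/(μ1(μ2+λ1)), a3 = λ1/μ1, a5 = λ1/(μ2+λ1). Then both roots l1 ≤ l2 of p(l) = l² − l(a1+a5−1) + a3·a5 are real and satisfy 0 < l1 < l2 < 1. -/
/-!
The two numbers are the roots of the monic quadratic `x² - b x + c` with `b = a1 + a5 - 1` and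
`c = a3 a5`. Both roots lie in `(0, 1)` as soon as the discriminant is positive, `p(0) = c > 0`,
`p(1) = 1 - b + c > 0` and the vertex `b / 2` lies in `(0, 1)`; here `b < 2` follows from
`p(1) > 0` and `c < 1`. In terms of the rates,
`p(1) > 0` is exactly the stability condition `μ1 μ2 > λ1 (μ2 + λ2)`, and the discriminant is
`λ1² ((μ2 + λ1 - μ1)² + λ2² + 2 λ2 (μ2 + λ1 + μ1))` over a positive square.
-/

open Real

section MonicQuadratic

variable {b c : ℝ}

theorem half_add_sq_sub_mul_add_eq_zero {s : ℝ} (hs : s ^ 2 = b ^ 2 - 4 * c) :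
    ((b + s) / 2) ^ 2 - (b + s) / 2 * b + c = 0 := by
  linear_combination hs / 4

theorem half_sub_sq_sub_mul_add_eq_zero {s : ℝ} (hs : s ^ 2 = b ^ 2 - 4 * c) :
    ((b - s) / 2) ^ 2 - (b - s) / 2 * b + c = 0 := by
  linear_combination hs / 4

theorem quadratic_roots_mem_Ioo_zero_one (hb₀ : 0 < b) (hb₂ : b < 2) (hc : 0 < c)
    (hone : 0 < 1 - b + c) (hD : 0 < b ^ 2 - 4 * c) :
    0 < (b - √(b ^ 2 - 4 * c)) / 2 ∧
      (b - √(b ^ 2 - 4 * c)) / 2 < (b + √(b ^ 2 - 4 * c)) / 2 ∧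
      (b + √(b ^ 2 - 4 * c)) / 2 < 1 := by
  have hs : 0 < √(b ^ 2 - 4 * c) := sqrt_pos.mpr hD
  have hs_lt_b : √(b ^ 2 - 4 * c) < b := (sqrt_lt' hb₀).mpr (by linarith)
  have hs_lt_two_sub_b : √(b ^ 2 - 4 * c) < 2 - b :=
    (sqrt_lt' (by linarith)).mpr (by nlinarith)
  refine ⟨?_, ?_, ?_⟩ <;> linarith

end MonicQuadratic

section Rates

variable {l1 l2 m1 m2 : ℝ}

theorem coeff_sum_eq (hm1 : 0 < m1) (hs : 0 < m2 + l1) :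
    1 + (l1 + l2) / m1 - m2 * l2 / (m1 * (m2 + l1)) + l1 / (m2 + l1) - 1 =
      l1 * (m2 + l1 + l2 + m1) / (m1 * (m2 + l1)) := by
  field_simp
  ring

theorem coeff_prod_eq (hm1 : 0 < m1) (hs : 0 < m2 + l1) :
    l1 / m1 * (l1 / (m2 + l1)) = l1 ^ 2 / (m1 * (m2 + l1)) := by
  field_simp

theorem stability_iff (hm2 : 0 < m2) :
    l1 * (1 + l2 / m2) < m1 ↔ l1 * m2 + l1 * l2 < m1 * m2 := by
  rw [show l1 * (1 + l2 / m2) = (l1 * m2 + l1 * l2) / m2 by field_simp, div_lt_iff₀ hm2]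

theorem discrim_rates_pos (hl1 : 0 < l1) (hl2 : 0 < l2) (hm1 : 0 < m1) (hm2 : 0 < m2) :
    0 < (l1 * (m2 + l1 + l2 + m1) / (m1 * (m2 + l1))) ^ 2 - 4 * (l1 ^ 2 / (m1 * (m2 + l1))) := by
  have hs : 0 < m2 + l1 := by positivity
  have h : (l1 * (m2 + l1 + l2 + m1) / (m1 * (m2 + l1))) ^ 2 - 4 * (l1 ^ 2 / (m1 * (m2 + l1))) =
      l1 ^ 2 * ((m2 + l1 - m1) ^ 2 + l2 ^ 2 + 2 * l2 * (m2 + l1 + m1)) / (m1 * (m2 + l1)) ^ 2 := by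
    field_simp
    ring
  rw [h]
  positivity

theorem one_sub_coeff_sum_add_coeff_prod_pos (hm1 : 0 < m1) (hs : 0 < m2 + l1)
    (hstab : l1 * m2 + l1 * l2 < m1 * m2) :
    0 < 1 - l1 * (m2 + l1 + l2 + m1) / (m1 * (m2 + l1)) + l1 ^ 2 / (m1 * (m2 + l1)) := by
  have h : 1 - l1 * (m2 + l1 + l2 + m1) / (m1 * (m2 + l1)) + l1 ^ 2 / (m1 * (m2 + l1)) =
      (m1 * m2 - l1 * m2 - l1 * l2) / (m1 * (m2 + l1)) := by
    field_simp
    ring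
  rw [h]
  exact div_pos (by linarith) (by positivity)

theorem coeff_prod_lt_one (hl1 : 0 < l1) (hl2 : 0 < l2) (hm1 : 0 < m1) (hm2 : 0 < m2)
    (hstab : l1 * m2 + l1 * l2 < m1 * m2) :
    l1 ^ 2 / (m1 * (m2 + l1)) < 1 := by
  have hl1m1 : l1 < m1 := lt_of_mul_lt_mul_right (by nlinarith) hm2.le
  rw [div_lt_one (by positivity)]
  nlinarith

end Rates

theorem stmt_3 (l1 l2 m1 m2 : ℝ) (hl1 : 0 < l1) (hl2 : 0 < l2)
    (hm1 : 0 < m1) (hm2 : 0 < m2) (hstab : m1 > l1 * (1 + l2 / m2))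
    (a1 : ℝ) (ha1 : a1 = 1 + (l1 + l2) / m1 - m2 * l2 / (m1 * (m2 + l1)))
    (a3 : ℝ) (ha3 : a3 = l1 / m1)
    (a5 : ℝ) (ha5 : a5 = l1 / (m2 + l1))
    (r1 r2 : ℝ)
    (hr1 : r1 = ((a1 + a5 - 1) - Real.sqrt ((a1 + a5 - 1) ^ 2 - 4 * (a3 * a5))) / 2)
    (hr2 : r2 = ((a1 + a5 - 1) + Real.sqrt ((a1 + a5 - 1) ^ 2 - 4 * (a3 * a5))) / 2) :
    (r1 ^ 2 - r1 * (a1 + a5 - 1) + a3 * a5 = 0) ∧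
    (r2 ^ 2 - r2 * (a1 + a5 - 1) + a3 * a5 = 0) ∧
    0 < r1 ∧ r1 < r2 ∧ r2 < 1 := by
  have hs : 0 < m2 + l1 := by positivity
  have hstab' := (stability_iff hm2).mp hstab
  subst ha1 ha3 ha5 hr1 hr2
  rw [coeff_sum_eq hm1 hs, coeff_prod_eq hm1 hs]
  have hD := discrim_rates_pos hl1 hl2 hm1 hm2
  have hone := one_sub_coeff_sum_add_coeff_prod_pos hm1 hs hstab'
  have hc_lt := coeff_prod_lt_one hl1 hl2 hm1 hm2 hstab'
  have hsq := sq_sqrt hD.le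
  exact ⟨half_sub_sq_sub_mul_add_eq_zero hsq, half_add_sq_sub_mul_add_eq_zero hsq,
    quadratic_roots_mem_Ioo_zero_one (by positivity) (by linarith) (by positivity) hone hD⟩
end

section
/- Let λ1, λ2, μ1, μ2 > 0 with μ1μ2 > λ1(μ2+λ2). Define φ_N(s) = π0·μ1(λ1+λ2+μ2 − λ1 e^s)/(μ1μ2 + μ1λ1 − e^s(λ1² + λ1λ2 + λ1μ1 + λ1μ2) + λ1² e^{2s}) where π0 = μ2/(μ2+λ2) − λ1/μ1. Then φ_N(0) = 1 and φ_N'(0) = λ1(2λ2μ2 + λ2μ1 + λ2² + μ2²)/((μ2+λ2)(μ1μ2 − λ1(μ2+λ2))). -/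
/-!
Writing φ(s) = (a + b eˢ) / (c + d eˢ + e e²ˢ), both claims are the quotient and the
quotient-rule derivative evaluated at s = 0. There the denominator is the stability margin
μ1μ2 − λ1(μ2+λ2), and π0 μ1 is the same margin divided by μ2 + λ2, so everything cancels.
-/

open Real

theorem hasDerivAt_add_mul_exp (a b x : ℝ) :
    HasDerivAt (fun s => a + b * exp s) (b * exp x) x :=
  ((hasDerivAt_exp x).const_mul b).const_add a

theorem hasDerivAt_add_mul_exp_add_mul_exp_two_mul (c d e x : ℝ) :
    HasDerivAt (fun s => c + d * exp s + e * exp (2 * s))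
      (d * exp x + 2 * e * exp (2 * x)) x := by
  have h2 : HasDerivAt (fun s => exp (2 * s)) (exp (2 * x) * 2) x := by
    simpa using ((hasDerivAt_id x).const_mul 2).exp
  exact ((hasDerivAt_add_mul_exp c d x).fun_add (h2.const_mul e)).congr_deriv (by ring)

theorem deriv_div_exp_quadratic_zero (a b c d e : ℝ) (h : c + d + e ≠ 0) :
    deriv (fun s => (a + b * exp s) / (c + d * exp s + e * exp (2 * s))) 0
      = (b * (c + d + e) - (a + b) * (d + 2 * e)) / (c + d + e) ^ 2 := by
  have hden : c + d * exp 0 + e * exp (2 * 0) ≠ 0 := by simpa using h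
  simpa using
    ((hasDerivAt_add_mul_exp a b 0).fun_div
      (hasDerivAt_add_mul_exp_add_mul_exp_two_mul c d e 0) hden).deriv

theorem stmt_13_general (l1 l2 m1 m2 : ℝ) (hl2 : 0 < l2)
    (hm1 : 0 < m1) (hm2 : 0 < m2) (hstab : m1 * m2 > l1 * (m2 + l2))
    (p0 : ℝ) (hp0 : p0 = m2 / (m2 + l2) - l1 / m1)
    (φ : ℝ → ℝ)
    (hφ : φ = fun s => p0 * m1 * (l1 + l2 + m2 - l1 * Real.exp s)
      / (m1 * m2 + m1 * l1
        - Real.exp s * (l1 ^ 2 + l1 * l2 + l1 * m1 + l1 * m2)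
        + l1 ^ 2 * Real.exp (2 * s))) :
    φ 0 = 1 ∧
    deriv φ 0 = l1 * (2 * l2 * m2 + l2 * m1 + l2 ^ 2 + m2 ^ 2)
      / ((m2 + l2) * (m1 * m2 - l1 * (m2 + l2))) := by
  have hmargin : m1 * m2 - l1 * (m2 + l2) ≠ 0 := by linarith
  have hsum : m2 + l2 ≠ 0 := by linarith
  have hp0_mul : p0 * m1 = (m1 * m2 - l1 * (m2 + l2)) / (m2 + l2) := by
    rw [hp0]; field_simp
  have hφ' : φ = fun s => (p0 * m1 * (l1 + l2 + m2) + (-(p0 * m1 * l1)) * exp s)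
      / (m1 * m2 + m1 * l1 + (-(l1 ^ 2 + l1 * l2 + l1 * m1 + l1 * m2)) * exp s
        + l1 ^ 2 * exp (2 * s)) := by
    rw [hφ]; funext s; ring
  have hden_zero : m1 * m2 + m1 * l1 + (-(l1 ^ 2 + l1 * l2 + l1 * m1 + l1 * m2)) + l1 ^ 2
      = m1 * m2 - l1 * (m2 + l2) := by ring
  constructor
  · rw [hφ']
    simp only [exp_zero, mul_zero, mul_one]
    rw [hden_zero, hp0_mul]
    field_simp
    ring
  · rw [hφ', deriv_div_exp_quadratic_zero _ _ _ _ _ (hden_zero ▸ hmargin), hden_zero, hp0_mul]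
    field_simp
    ring

theorem stmt_13 (l1 l2 m1 m2 : ℝ) (hl1 : 0 < l1) (hl2 : 0 < l2)
    (hm1 : 0 < m1) (hm2 : 0 < m2) (hstab : m1 * m2 > l1 * (m2 + l2))
    (p0 : ℝ) (hp0 : p0 = m2 / (m2 + l2) - l1 / m1)
    (φ : ℝ → ℝ)
    (hφ : φ = fun s => p0 * m1 * (l1 + l2 + m2 - l1 * Real.exp s)
      / (m1 * m2 + m1 * l1
        - Real.exp s * (l1 ^ 2 + l1 * l2 + l1 * m1 + l1 * m2)
        + l1 ^ 2 * Real.exp (2 * s))) :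
    φ 0 = 1 ∧
    deriv φ 0 = l1 * (2 * l2 * m2 + l2 * m1 + l2 ^ 2 + m2 ^ 2)
      / ((m2 + l2) * (m1 * m2 - l1 * (m2 + l2))) :=
  stmt_13_general l1 l2 m1 m2 hl2 hm1 hm2 hstab p0 hp0 φ hφ
end

section
/- Let λ1, λ2, μ1, μ2 > 0 with μ1μ2 − λ1μ2 − λ1λ2 > 0, and let α1 > α2 > 0 be the roots of s² − s(μ1+μ2+λ2−λ1) + (μ1μ2 − λ1μ2 − λ1λ2), ρ = λ1(μ2+λ2)/(μ1μ2), C1 = (1−ρ)μ1(μ2−α1)/(α1−α2), C2 = (1−ρ)μ1(μ2−α2)/(α2−α1). Then ∫₀^∞ (−C1 e^{−α1 t} − C2 e^{−α2 t}) dt = 1. -/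
/-! The integral equals `-C1/α1 - C2/α2 = (1-ρ) μ1 μ2 / (α1 α2)`, and by Vieta
`α1 α2 = μ1 μ2 - λ1 μ2 - λ1 λ2 = (1-ρ) μ1 μ2`. -/

open MeasureTheory Set Real

theorem integral_exp_neg_mul_Ioi_zero {a : ℝ} (ha : 0 < a) :
    ∫ t in Ioi (0 : ℝ), exp (-a * t) = 1 / a := by
  rw [integral_exp_mul_Ioi (neg_neg_of_pos ha)]
  simp

theorem integral_sub_exp_neg_mul_Ioi_zero (c d : ℝ) {a b : ℝ} (ha : 0 < a) (hb : 0 < b) :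
    ∫ t in Ioi (0 : ℝ), (c * exp (-a * t) - d * exp (-b * t)) = c / a - d / b := by
  rw [integral_sub ((exp_neg_integrableOn_Ioi 0 ha).const_mul c)
      ((exp_neg_integrableOn_Ioi 0 hb).const_mul d), integral_const_mul, integral_const_mul,
    integral_exp_neg_mul_Ioi_zero ha, integral_exp_neg_mul_Ioi_zero hb, mul_one_div, mul_one_div]

theorem mul_eq_of_quadratic_roots {K : Type*} [Field K] {x y s p : K} (hxy : x ≠ y)
    (hx : x ^ 2 - x * s + p = 0) (hy : y ^ 2 - y * s + p = 0) : x * y = p := by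
  have hsum : x + y = s := by
    have h : (x - y) * (x + y - s) = 0 := by linear_combination hx - hy
    exact sub_eq_zero.1 ((mul_eq_zero.1 h).resolve_left (sub_ne_zero.2 hxy))
  linear_combination -hx + x * hsum

theorem stmt_15_general (l1 l2 m1 m2 : ℝ)
    (hm1 : 0 < m1) (hm2 : 0 < m2)
    (α1 α2 ρ C1 C2 : ℝ)
    (hroot1 : α1 ^ 2 - α1 * (m1 + m2 + l2 - l1) + (m1 * m2 - l1 * m2 - l1 * l2) = 0)
    (hroot2 : α2 ^ 2 - α2 * (m1 + m2 + l2 - l1) + (m1 * m2 - l1 * m2 - l1 * l2) = 0)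
    (horder : α1 > α2) (hα2 : α2 > 0)
    (hρ : ρ = l1 * (m2 + l2) / (m1 * m2))
    (hC1 : C1 = (1 - ρ) * m1 * (m2 - α1) / (α1 - α2))
    (hC2 : C2 = (1 - ρ) * m1 * (m2 - α2) / (α2 - α1)) :
    ∫ t in Set.Ioi (0 : ℝ), (-C1 * Real.exp (-α1 * t) - C2 * Real.exp (-α2 * t)) = 1 := by
  have hα1 : 0 < α1 := hα2.trans horder
  have hprod := mul_eq_of_quadratic_roots horder.ne' hroot1 hroot2
  rw [integral_sub_exp_neg_mul_Ioi_zero _ _ hα1 hα2, hC1, hC2, hρ]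
  have hsub : α1 - α2 ≠ 0 := sub_ne_zero.2 horder.ne'
  have hsub' : α2 - α1 ≠ 0 := sub_ne_zero.2 horder.ne
  field_simp
  linear_combination m2 * (α1 - α2) ^ 2 * hprod

theorem stmt_15 (l1 l2 m1 m2 : ℝ) (hl1 : 0 < l1) (hl2 : 0 < l2)
    (hm1 : 0 < m1) (hm2 : 0 < m2)
    (hpos : 0 < m1 * m2 - l1 * m2 - l1 * l2)
    (α1 α2 ρ C1 C2 : ℝ)
    (hroot1 : α1 ^ 2 - α1 * (m1 + m2 + l2 - l1) + (m1 * m2 - l1 * m2 - l1 * l2) = 0)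
    (hroot2 : α2 ^ 2 - α2 * (m1 + m2 + l2 - l1) + (m1 * m2 - l1 * m2 - l1 * l2) = 0)
    (horder : α1 > α2) (hα2 : α2 > 0)
    (hρ : ρ = l1 * (m2 + l2) / (m1 * m2))
    (hC1 : C1 = (1 - ρ) * m1 * (m2 - α1) / (α1 - α2))
    (hC2 : C2 = (1 - ρ) * m1 * (m2 - α2) / (α2 - α1)) :
    ∫ t in Set.Ioi (0 : ℝ), (-C1 * Real.exp (-α1 * t) - C2 * Real.exp (-α2 * t)) = 1 :=
  stmt_15_general l1 l2 m1 m2 hm1 hm2 α1 α2 ρ C1 C2 hroot1 hroot2 horder hα2 hρ hC1 hC2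
end

section
/- Let λ1, λ2, μ1, μ2 > 0 with μ1 > λ1(1+λ2/μ2). Let 0 < l1 < l2 < 1 be the roots of p(l) = l² − l(a1+a5−1) + a3a5 with a1 = 1 + (λ1+λ2)/μ1 − μ2λ2/(μ1(μ2+λ1)), a3 = λ1/μ1, a4 = λ2/(μ2+λ1), a5 = λ1/(μ2+λ1). Define vectors e_j = (l_j(l_j−a5), l_j a4, l_j−a5, a4) for j = 1,2 and α2 = 1/(l2−l1) = −α1. Then for every i ≥ 1, all four components of α2 l2^i e_2 + α1 l1^i e_1 are strictly positive. -/
/-!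
The roots `r₁ < r₂` of `p` lie on either side of `a₅`, because
`p(a₅) = a₅ (a₃ + 1 - a₁) < 0`. As `α₁ = -α₂` with `α₂ > 0`, it suffices that
`r₁ⁱ e₁ < r₂ⁱ e₂` componentwise: for the components `1` and `3` because `r ↦ rⁱ⁺¹ a₄` and
`r ↦ rⁱ a₄` are strictly increasing, for the components `0` and `2` because the factor `r - a₅`
is negative at `r₁` and positive at `r₂`.
-/

lemma quadratic_eq_mul_sub_mul_sub {p q r s : ℝ} (hrs : r ≠ s)
    (hr : r ^ 2 - r * p + q = 0) (hs : s ^ 2 - s * p + q = 0) (x : ℝ) :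
    x ^ 2 - x * p + q = (x - r) * (x - s) := by
  have hsum : r + s = p := by
    have h : (r - s) * (r + s - p) = 0 := by linear_combination hr - hs
    linarith [(mul_eq_zero.mp h).resolve_left (sub_ne_zero.mpr hrs)]
  linear_combination hr + (x - r) * hsum

lemma mem_Ioo_of_quadratic_neg {p q r s t : ℝ} (hrs : r < s)
    (hr : r ^ 2 - r * p + q = 0) (hs : s ^ 2 - s * p + q = 0)
    (ht : t ^ 2 - t * p + q < 0) : t ∈ Set.Ioo r s := by
  rw [quadratic_eq_mul_sub_mul_sub hrs.ne hr hs] at ht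
  constructor <;> nlinarith

lemma pow_mul_lt_pow_mul_of_lt_of_lt {a d r s : ℝ} (hr : 0 < r) (hra : r < a) (has : a < s)
    (hd : 0 < d) {i : ℕ} (hi : i ≠ 0) (k : Fin 4) :
    r ^ i * ![r * (r - a), r * d, r - a, d] k < s ^ i * ![s * (s - a), s * d, s - a, d] k := by
  have hs : 0 < s := by linarith
  have hri : 0 < r ^ i := pow_pos hr i
  have hsi : 0 < s ^ i := pow_pos hs i
  fin_cases k <;> simp only [Fin.zero_eta, Fin.mk_one, Fin.reduceFinMk, Matrix.cons_val]
  · have hneg : r ^ i * (r * (r - a)) < 0 :=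
      mul_neg_of_pos_of_neg hri (mul_neg_of_pos_of_neg hr (by linarith))
    have hpos : 0 < s ^ i * (s * (s - a)) := mul_pos hsi (mul_pos hs (by linarith))
    linarith
  · gcongr <;> linarith
  · have hneg : r ^ i * (r - a) < 0 := mul_neg_of_pos_of_neg hri (by linarith)
    have hpos : 0 < s ^ i * (s - a) := mul_pos hsi (by linarith)
    linarith
  · gcongr; linarith

theorem stmt_16_general (l1 l2 m1 m2 : ℝ) (hl1 : 0 < l1) (hl2 : 0 < l2)
    (hm1 : 0 < m1) (hm2 : 0 < m2)
    (a1 a3 a4 a5 : ℝ)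
    (ha1 : a1 = 1 + (l1 + l2) / m1 - m2 * l2 / (m1 * (m2 + l1)))
    (ha3 : a3 = l1 / m1) (ha4 : a4 = l2 / (m2 + l1)) (ha5 : a5 = l1 / (m2 + l1))
    (r1 r2 : ℝ)
    (hroot1 : r1 ^ 2 - r1 * (a1 + a5 - 1) + a3 * a5 = 0)
    (hroot2 : r2 ^ 2 - r2 * (a1 + a5 - 1) + a3 * a5 = 0)
    (h0 : 0 < r1) (h12 : r1 < r2)
    (α1 α2 : ℝ) (hα2 : α2 = 1 / (r2 - r1)) (hα1 : α1 = -α2)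
    (e1 e2 : Fin 4 → ℝ)
    (he1 : e1 = ![r1 * (r1 - a5), r1 * a4, r1 - a5, a4])
    (he2 : e2 = ![r2 * (r2 - a5), r2 * a4, r2 - a5, a4]) :
    ∀ i : ℕ, 1 ≤ i → ∀ k : Fin 4,
      0 < α2 * r2 ^ i * e2 k + α1 * r1 ^ i * e1 k := by
  have ha4_pos : 0 < a4 := by rw [ha4]; positivity
  have ha5_pos : 0 < a5 := by rw [ha5]; positivity
  have ha1_gt : a3 + 1 < a1 := by
    have h : a1 - a3 - 1 = l2 * l1 / (m1 * (m2 + l1)) := by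
      rw [ha1, ha3]; field_simp; ring
    have : 0 < l2 * l1 / (m1 * (m2 + l1)) := by positivity
    linarith
  have hp_a5 : a5 ^ 2 - a5 * (a1 + a5 - 1) + a3 * a5 < 0 := by
    rw [show a5 ^ 2 - a5 * (a1 + a5 - 1) + a3 * a5 = a5 * (a3 + 1 - a1) by ring]
    exact mul_neg_of_pos_of_neg ha5_pos (by linarith)
  obtain ⟨hr1, hr2⟩ := mem_Ioo_of_quadratic_neg h12 hroot1 hroot2 hp_a5
  have hα2_pos : 0 < α2 := by rw [hα2]; exact one_div_pos.mpr (sub_pos.mpr h12)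
  intro i hi k
  have hlt := pow_mul_lt_pow_mul_of_lt_of_lt h0 hr1 hr2 ha4_pos (by omega : i ≠ 0) k
  rw [← he1, ← he2] at hlt
  have h : α2 * r2 ^ i * e2 k + α1 * r1 ^ i * e1 k = α2 * (r2 ^ i * e2 k - r1 ^ i * e1 k) := by
    rw [hα1]; ring
  rw [h]
  exact mul_pos hα2_pos (sub_pos.mpr hlt)

theorem stmt_16 (l1 l2 m1 m2 : ℝ) (hl1 : 0 < l1) (hl2 : 0 < l2)
    (hm1 : 0 < m1) (hm2 : 0 < m2) (hstab : m1 > l1 * (1 + l2 / m2))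
    (a1 a3 a4 a5 : ℝ)
    (ha1 : a1 = 1 + (l1 + l2) / m1 - m2 * l2 / (m1 * (m2 + l1)))
    (ha3 : a3 = l1 / m1) (ha4 : a4 = l2 / (m2 + l1)) (ha5 : a5 = l1 / (m2 + l1))
    (r1 r2 : ℝ)
    (hroot1 : r1 ^ 2 - r1 * (a1 + a5 - 1) + a3 * a5 = 0)
    (hroot2 : r2 ^ 2 - r2 * (a1 + a5 - 1) + a3 * a5 = 0)
    (h0 : 0 < r1) (h12 : r1 < r2) (h21 : r2 < 1)
    (α1 α2 : ℝ) (hα2 : α2 = 1 / (r2 - r1)) (hα1 : α1 = -α2)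
    (e1 e2 : Fin 4 → ℝ)
    (he1 : e1 = ![r1 * (r1 - a5), r1 * a4, r1 - a5, a4])
    (he2 : e2 = ![r2 * (r2 - a5), r2 * a4, r2 - a5, a4]) :
    ∀ i : ℕ, 1 ≤ i → ∀ k : Fin 4,
      0 < α2 * r2 ^ i * e2 k + α1 * r1 ^ i * e1 k :=
  stmt_16_general l1 l2 m1 m2 hl1 hl2 hm1 hm2 a1 a3 a4 a5 ha1 ha3 ha4 ha5 r1 r2 hroot1 hroot2 h0 h12
    α1 α2 hα2 hα1 e1 e2 he1 he2
end

section
/- Let λ2, μ2 > 0. The function g(λ2) = 1/μ2 + 1/λ2 (the average age of the M/M/1/1 preemptive priority stream) is strictly decreasing in λ2, while for fixed λ1, μ1, μ2 with μ1μ2 > λ1(μ2+λ2), the average peak age Δ_peak(λ2) = 1/λ1 + (2λ2μ2+λ2μ1+λ2²+μ2²)/((μ2+λ2)(μ1μ2−λ1(μ2+λ2))) is strictly increasing in λ2 on the interval 0 < λ2 < μ1μ2/λ1 − μ2. -/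
theorem stmt_18 (l1 m1 m2 : ℝ) (hl1 : 0 < l1) (hm1 : 0 < m1) (hm2 : 0 < m2) :
    StrictAntiOn (fun l2 : ℝ => 1 / m2 + 1 / l2) (Set.Ioi 0) ∧
    StrictMonoOn (fun l2 : ℝ => 1 / l1
      + (2 * l2 * m2 + l2 * m1 + l2 ^ 2 + m2 ^ 2)
        / ((m2 + l2) * (m1 * m2 - l1 * (m2 + l2))))
      (Set.Ioo 0 (m1 * m2 / l1 - m2)) := by
  constructor
  · intro x hx y hy hxy
    have hx0 : (0:ℝ) < x := hx
    have : (1:ℝ) / y < 1 / x := one_div_lt_one_div_of_lt hx0 hxy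
    simp only
    linarith
  · intro x hx y hy hxy
    obtain ⟨hx0, hxlt⟩ := hx
    obtain ⟨hy0, hylt⟩ := hy
    have hDx : 0 < m1 * m2 - l1 * (m2 + x) := by
      rw [lt_sub_iff_add_lt, lt_div_iff₀ hl1] at hxlt
      nlinarith
    have hDy : 0 < m1 * m2 - l1 * (m2 + y) := by
      rw [lt_sub_iff_add_lt, lt_div_iff₀ hl1] at hylt
      nlinarith
    have hml : l1 < m1 := by nlinarith
    have hx2 : 0 < m2 + x := by linarith
    have hy2 : 0 < m2 + y := by linarith
    simp only
    have key : (2 * x * m2 + x * m1 + x ^ 2 + m2 ^ 2)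
          / ((m2 + x) * (m1 * m2 - l1 * (m2 + x)))
        < (2 * y * m2 + y * m1 + y ^ 2 + m2 ^ 2)
          / ((m2 + y) * (m1 * m2 - l1 * (m2 + y))) := by
      rw [div_lt_div_iff₀ (by positivity) (by positivity)]
      nlinarith [mul_pos (mul_pos (sub_pos.2 hxy) hm1)
          (mul_pos (mul_pos hm2 hm2) (by linarith : (0:ℝ) < m2 + m1 - l1 + x + y)),
        mul_pos (mul_pos (sub_pos.2 hxy) hm1)
          (mul_pos (mul_pos hx0 hy0) (by linarith : (0:ℝ) < m2 + l1))]
    linarith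
end
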